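/- Let μ > 0, d > 0, r ∈ ℝ, and consider the objective h(w, z) = (1/2)(w − r)² + μz + d(w²/z − w²) with conventions 0²/0 = 0 and w²/0 = +∞ for w ≠ 0. Then: (i) the infimum of h over {(w, z) : z = 0, w ∈ ℝ} subject to |r − w| ≤ √(2μ)(1 − z) equals (1/2)r² if |r| ≤ √(2μ) and +∞ otherwise; (ii) the infimum of h over {(w, z) : z = 1, w ≤ 0} subject to |w| ≥ √(2μ)z and |r − w| ≤ √(2μ)(1 − z) equals μ if r ≤ −√(2μ) and +∞ otherwise; (iii) the infimum of h over {(w, z) : z = 1, w ≥ 0} subject to the same two constraints equals μ if r ≥ √(2μ) and +∞ otherwise. -/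
import Mathlib


/-- The objective h(w,z) = (1/2)(w−r)² + μz + d(w²/z − w²), EReal-valued,
with the conventions h(0,0) = (1/2)r² and h(w,0) = +∞ for w ≠ 0. -/
noncomputable def hObj (mu d r w z : ℝ) : EReal :=
  if z = 0 then (if w = 0 then (((1/2) * (w - r)^2 : ℝ) : EReal) else ⊤)
  else (((1/2) * (w - r)^2 + mu * z + d * (w^2 / z - w^2) : ℝ) : EReal)

/-- the three constrained infima of h corresponding to the
branching cases z = 0, (z = 1, w ≤ 0), (z = 1, w ≥ 0). (In EReal, the infimum
over an empty set is ⊤ = +∞.) -/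
theorem stmt_8 (mu d r : ℝ) (hmu : 0 < mu) (hd0 : 0 < d) :
    (sInf {v : EReal | ∃ w : ℝ,
        |r - w| ≤ Real.sqrt (2*mu) * (1 - (0:ℝ)) ∧ v = hObj mu d r w 0}
      = if |r| ≤ Real.sqrt (2*mu) then (((1/2) * r^2 : ℝ) : EReal) else ⊤) ∧
    (sInf {v : EReal | ∃ w : ℝ, w ≤ 0 ∧
        Real.sqrt (2*mu) * (1:ℝ) ≤ |w| ∧
        |r - w| ≤ Real.sqrt (2*mu) * (1 - (1:ℝ)) ∧ v = hObj mu d r w 1}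
      = if r ≤ -Real.sqrt (2*mu) then ((mu : ℝ) : EReal) else ⊤) ∧
    (sInf {v : EReal | ∃ w : ℝ, 0 ≤ w ∧
        Real.sqrt (2*mu) * (1:ℝ) ≤ |w| ∧
        |r - w| ≤ Real.sqrt (2*mu) * (1 - (1:ℝ)) ∧ v = hObj mu d r w 1}
      = if Real.sqrt (2*mu) ≤ r then ((mu : ℝ) : EReal) else ⊤) := by
  have hspos : 0 < Real.sqrt (2*mu) := Real.sqrt_pos.mpr (by linarith)
  set s := Real.sqrt (2*mu) with hs
  have hval : ∀ w : ℝ, hObj mu d r w 1 = (((1/2) * (w - r)^2 + mu : ℝ) : EReal) := by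
    intro w
    simp only [hObj, one_ne_zero, if_false]
    norm_num
  refine ⟨?_, ?_, ?_⟩
  · by_cases hc : |r| ≤ s
    · rw [if_pos hc]
      apply le_antisymm
      · apply sInf_le
        refine ⟨0, by simpa using hc, ?_⟩
        simp only [hObj, if_pos rfl]
        norm_num
      · apply le_sInf
        rintro v ⟨w, hw, rfl⟩
        by_cases hw0 : w = 0
        · subst hw0
          simp only [hObj, if_pos rfl]
          apply le_of_eq
          norm_num
        · simp [hObj, hw0]
    · rw [if_neg hc]
      refine eq_top_iff.mpr (le_sInf ?_)
      rintro v ⟨w, hw, rfl⟩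
      by_cases hw0 : w = 0
      · exfalso; subst hw0; simp at hw; exact hc (by linarith [hw])
      · simp [hObj, hw0]
  · by_cases hc : r ≤ -s
    · rw [if_pos hc]
      have hmem : ((mu : ℝ) : EReal) ∈ {v : EReal | ∃ w : ℝ, w ≤ 0 ∧
          s * (1:ℝ) ≤ |w| ∧ |r - w| ≤ s * (1 - (1:ℝ)) ∧ v = hObj mu d r w 1} := by
        refine ⟨r, by linarith, ?_, by simp, ?_⟩
        · rw [abs_of_nonpos (by linarith)]; linarith
        · rw [hval]; norm_num
      apply le_antisymm (sInf_le hmem)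
      apply le_sInf
      rintro v ⟨w, hw0, hws, hwr, rfl⟩
      have hwr' : w = r := by
        have : |r - w| ≤ 0 := by simpa using hwr
        have := abs_nonpos_iff.mp this; linarith
      subst hwr'
      rw [hval]; norm_num
    · rw [if_neg hc]
      refine eq_top_iff.mpr (le_sInf ?_)
      rintro v ⟨w, hw0, hws, hwr, rfl⟩
      exfalso
      have hwr' : w = r := by
        have : |r - w| ≤ 0 := by simpa using hwr
        have := abs_nonpos_iff.mp this; linarith
      subst hwr'
      rw [abs_of_nonpos hw0] at hws
      exact hc (by linarith)
  · by_cases hc : s ≤ r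
    · rw [if_pos hc]
      have hmem : ((mu : ℝ) : EReal) ∈ {v : EReal | ∃ w : ℝ, 0 ≤ w ∧
          s * (1:ℝ) ≤ |w| ∧ |r - w| ≤ s * (1 - (1:ℝ)) ∧ v = hObj mu d r w 1} := by
        refine ⟨r, by linarith, ?_, by simp, ?_⟩
        · rw [abs_of_nonneg (by linarith)]; linarith
        · rw [hval]; norm_num
      apply le_antisymm (sInf_le hmem)
      apply le_sInf
      rintro v ⟨w, hw0, hws, hwr, rfl⟩
      have hwr' : w = r := by
        have : |r - w| ≤ 0 := by simpa using hwr
        have := abs_nonpos_iff.mp this; linarith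
      subst hwr'
      rw [hval]; norm_num
    · rw [if_neg hc]
      refine eq_top_iff.mpr (le_sInf ?_)
      rintro v ⟨w, hw0, hws, hwr, rfl⟩
      exfalso
      have hwr' : w = r := by
        have : |r - w| ≤ 0 := by simpa using hwr
        have := abs_nonpos_iff.mp this; linarith
      subst hwr'
      rw [abs_of_nonneg hw0] at hws
      exact hc (by linarith)
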